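/- arXiv:2510.03281 — 3 statements merged into one kernel-verified Lean document; each statement's English description precedes it below -/
import Mathlib

section
/- For d ≥ 3, with π(s) = (d-1)/(C(d,s)·s·(d-s)), the identity 2·Σ_{s=1}^{d-1} π(s)·C(d-3, s-1) = (d-1)/d holds, where C(n,k) = 0 whenever k < 0 or k > n. -/
/-!
Write `d = m + 3` and `s = t + 1`. The absorption identities
`C(m+3, t+1)·(t+1)·(m+2-t) = (m+3)(m+2)·C(m+1, t)` and `C(m+1, t)·(m+1-t) = (m+1)·C(m, t)`
cancel all binomial coefficients: `π(s)·C(d-3, s-1) = (d-1-s)/(d(d-2))`. The summands thus form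
an arithmetic progression, whose sum over `1 ≤ s ≤ d-1` is `(d-1)(d-2)/2`.
-/

/-- The Shapley kernel weight `π(s) = (d-1)/(C(d,s)·s·(d-s))`. -/
noncomputable def shapleyKernel (d s : ℕ) : ℝ :=
  ((d : ℝ) - 1) / ((d.choose s : ℝ) * (s : ℝ) * ((d : ℝ) - (s : ℝ)))

/-- Binomial coefficient with the convention `C(n,k) = 0` for `k < 0` or `k > n`. -/
noncomputable def binom (n : ℕ) (k : ℤ) : ℝ :=
  if k < 0 then 0 else (n.choose k.toNat : ℝ)

open Finset

theorem Nat.choose_succ_succ_mul_mul_sub (n k : ℕ) :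
    (n + 2).choose (k + 1) * (k + 1) * (n + 1 - k) = (n + 2) * (n + 1) * n.choose k := by
  rw [← Nat.add_one_mul_choose_eq, mul_assoc, ← Nat.choose_mul_succ_eq]
  ring

theorem Finset.sum_Icc_one_eq_sum_range {M : Type*} [AddCommMonoid M] (f : ℕ → M) (n : ℕ) :
    ∑ s ∈ Icc 1 n, f s = ∑ t ∈ range n, f (t + 1) := by
  rw [← Ico_add_one_right_eq_Icc, sum_Ico_eq_sum_range, Nat.add_sub_cancel]
  simp only [add_comm]

theorem two_mul_sum_range_sub (n : ℕ) :
    2 * ∑ t ∈ range (n + 1), ((n : ℝ) - t) = n * (n + 1) := by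
  have h := sum_range_id_mul_two (n + 1)
  rw [Nat.add_sub_cancel] at h
  have h' := congrArg (Nat.cast (R := ℝ)) h
  push_cast at h'
  rw [sum_sub_distrib, sum_const, card_range, nsmul_eq_mul]
  push_cast
  linarith

theorem binom_natCast (n k : ℕ) : binom n k = n.choose k := by
  simp [binom]

theorem shapleyKernel_mul_choose (m t : ℕ) (ht : t ≤ m + 1) :
    shapleyKernel (m + 3) (t + 1) * m.choose t =
      ((m : ℝ) + 1 - t) / (((m : ℝ) + 3) * ((m : ℝ) + 1)) := by
  have absorb₁ : ((m + 3).choose (t + 1) : ℝ) * (t + 1) * ((m : ℝ) + 2 - t) =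
      ((m : ℝ) + 3) * ((m : ℝ) + 2) * (m + 1).choose t := by
    have := Nat.choose_succ_succ_mul_mul_sub (m + 1) t
    rw [← Nat.cast_inj (R := ℝ)] at this
    push_cast [Nat.cast_sub (show t ≤ m + 1 + 1 by omega)] at this
    convert this using 2 <;> ring
  have absorb₂ : (m.choose t : ℝ) * ((m : ℝ) + 1) = (m + 1).choose t * ((m : ℝ) + 1 - t) := by
    exact_mod_cast Nat.choose_mul_succ_eq m t
  have hc : ((m + 3).choose (t + 1) : ℝ) ≠ 0 := by
    exact_mod_cast (Nat.choose_pos (by omega)).ne'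
  have hs : (m : ℝ) + 3 - (t + 1) ≠ 0 := by
    have : (t : ℝ) ≤ m + 1 := by exact_mod_cast ht
    linarith
  have hden : ((m + 3).choose (t + 1) : ℝ) * (t + 1) * ((m : ℝ) + 3 - (t + 1)) ≠ 0 :=
    mul_ne_zero (mul_ne_zero hc (by positivity)) hs
  unfold shapleyKernel
  rw [div_mul_eq_mul_div, div_eq_div_iff (by push_cast; exact hden) (by positivity)]
  push_cast
  linear_combination ((m : ℝ) + 2) * ((m : ℝ) + 3) * absorb₂ - ((m : ℝ) + 1 - t) * absorb₁

theorem kernel_sum_a (d : ℕ) (hd : 3 ≤ d) :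
    2 * ∑ s ∈ Finset.Icc 1 (d - 1), shapleyKernel d s * binom (d - 3) ((s : ℤ) - 1) =
      ((d : ℝ) - 1) / d := by
  obtain ⟨m, rfl⟩ : ∃ m, d = m + 3 := ⟨d - 3, by omega⟩
  rw [show m + 3 - 1 = m + 1 + 1 by omega, Nat.add_sub_cancel, sum_Icc_one_eq_sum_range]
  have hterm : ∀ t ∈ range (m + 1 + 1),
      shapleyKernel (m + 3) (t + 1) * binom m (((t + 1 : ℕ) : ℤ) - 1) =
        ((m : ℝ) + 1 - t) / (((m : ℝ) + 3) * ((m : ℝ) + 1)) := by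
    intro t ht
    rw [mem_range] at ht
    rw [Nat.cast_succ, add_sub_cancel_right, binom_natCast, shapleyKernel_mul_choose m t (by omega)]
  have hgauss := two_mul_sum_range_sub (m + 1)
  push_cast at hgauss
  rw [sum_congr rfl hterm, ← sum_div, ← mul_div_assoc, hgauss]
  push_cast
  field_simp
  ring
end

section
/- For d ≥ 3, with π(s) = (d-1)/(C(d,s)·s·(d-s)), the identity 2·Σ_{s=1}^{d-1} π(s)·C(d-3, s-2) = (d-1)/d holds, where C(n,k) = 0 whenever k < 0 or k > n. -/
/-!
With `d = t + u + 3` and `s = t + 2`, the ratio `C(d-3, s-2) / C(d, s)` equals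
`s (s-1) (d-s) / (d (d-1) (d-2))`, which cancels everything in `π(s)` except `d - 1`. Each summand
is therefore `(s-1) / (d (d-2))` (also for `s = 1`, where `C(d-3, -1) = 0`), and the sum of
`s - 1` over `1 ≤ s ≤ d-1` is `(d-1)(d-2)/2`.
-/

open Finset

theorem Nat.choose_add_three_mul (t u : ℕ) :
    (t + u + 3).choose (t + 2) * ((t + 2) * (t + 1) * (u + 1)) =
      (t + u + 3) * (t + u + 2) * (t + u + 1) * (t + u).choose t := by
  have h₁ : (t + u + 3) * (t + u + 2).choose (t + 1) = (t + u + 3).choose (t + 2) * (t + 2) :=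
    Nat.add_one_mul_choose_eq _ _
  have h₂ : (t + u + 2) * (t + u + 1).choose t = (t + u + 2).choose (t + 1) * (t + 1) :=
    Nat.add_one_mul_choose_eq _ _
  have h₃ : (t + u).choose t * (t + u + 1) = (t + u + 1).choose t * (u + 1) := by
    rw [Nat.choose_mul_succ_eq]; congr 2; omega
  calc (t + u + 3).choose (t + 2) * ((t + 2) * (t + 1) * (u + 1))
      = (t + u + 3).choose (t + 2) * (t + 2) * (t + 1) * (u + 1) := by ring
    _ = (t + u + 3) * ((t + u + 2).choose (t + 1) * (t + 1)) * (u + 1) := by rw [← h₁]; ring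
    _ = (t + u + 3) * (t + u + 2) * ((t + u + 1).choose t * (u + 1)) := by rw [← h₂]; ring
    _ = (t + u + 3) * (t + u + 2) * (t + u + 1) * (t + u).choose t := by rw [← h₃]; ring

theorem shapleyKernel_mul_binom {d s : ℕ} (hs : 1 ≤ s) (hsd : s < d) :
    shapleyKernel d s * binom (d - 3) ((s : ℤ) - 2) = ((s : ℝ) - 1) / (d * (d - 2)) := by
  obtain rfl | ⟨t, rfl⟩ : s = 1 ∨ ∃ t, s = t + 2 :=
    (Nat.lt_or_ge s 2).imp (by omega) fun h ↦ ⟨s - 2, by omega⟩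
  · simp [binom]
  obtain ⟨u, rfl⟩ : ∃ u, d = t + u + 3 := ⟨d - t - 3, by omega⟩
  have hbinom : binom (t + u + 3 - 3) (((t + 2 : ℕ) : ℤ) - 2) = (t + u).choose t := by
    simp [binom, show t + u + 3 - 3 = t + u by omega]
  have hchoose : (0 : ℝ) < (t + u + 3).choose (t + 2) := by
    exact_mod_cast Nat.choose_pos (by omega)
  have hnat : ((t + u + 3).choose (t + 2) * ((t + 2) * (t + 1) * (u + 1)) : ℝ) =
      (t + u + 3) * (t + u + 2) * (t + u + 1) * (t + u).choose t := by
    exact_mod_cast Nat.choose_add_three_mul t u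
  rw [hbinom, shapleyKernel]
  push_cast
  rw [show (t + u + 3 : ℝ) - (t + 2) = u + 1 by ring, show (t + u + 3 : ℝ) - 2 = t + u + 1 by ring,
    div_mul_eq_mul_div, div_eq_div_iff (by positivity) (by positivity)]
  linear_combination -hnat

theorem sum_Icc_cast_sub_one (m : ℕ) :
    ∑ s ∈ Icc 1 m, ((s : ℝ) - 1) = m * (m - 1) / 2 := by
  induction m with
  | zero => simp
  | succ m ih =>
    rw [sum_Icc_succ_top (by omega), ih]
    push_cast
    ring

theorem kernel_sum_b (d : ℕ) (hd : 3 ≤ d) :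
    2 * ∑ s ∈ Finset.Icc 1 (d - 1), shapleyKernel d s * binom (d - 3) ((s : ℤ) - 2) =
      ((d : ℝ) - 1) / d := by
  have hd' : (3 : ℝ) ≤ d := by exact_mod_cast hd
  have hterm : ∀ s ∈ Icc 1 (d - 1),
      shapleyKernel d s * binom (d - 3) ((s : ℤ) - 2) = ((s : ℝ) - 1) / (d * (d - 2)) := by
    intro s hs
    rw [mem_Icc] at hs
    exact shapleyKernel_mul_binom hs.1 (by omega)
  rw [sum_congr rfl hterm, ← sum_div, sum_Icc_cast_sub_one, Nat.cast_sub (by omega)]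
  have : (d : ℝ) - 2 ≠ 0 := by linarith
  field_simp
  ring
end

section
/- For d ≥ 2 and any fixed i ∈ {1,...,d-1}, Σ_{z ∈ {0,1}^d, z ≠ 1, z_d = 1} [ (d/(d-1))·(z_i - 1) + (1/(d-1))·(d - |z|) ] · π(d - |z|) = -1/d, where |z| is the number of ones in z, 1 is the all-ones vector, and π(s) = (d-1)/(C(d,s)·s·(d-s)). -/
/-!
Write `T = Sᶜ` for the zero set of `z`; it ranges over the nonempty subsets of `[d] \ {d}`, and
the summand becomes `(|T| - d · [i ∈ T]) · π(|T|) / (d - 1)`. Pair each `T ∌ i` with `T ∪ {i}`: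
for `|T| = k ≥ 1` the two terms cancel because `k · π(k) = (d - k - 1) · π(k + 1)`, which is the
identity `(k + 1) · C(d, k + 1) = (d - k) · C(d, k)`. Only the pair `(∅, {i})` survives, and it
contributes `-π(1) = -1/d`.
-/

open Finset

/-- The 0-1 indicator vector of a subset `S ⊆ [d]` (the binary vector `z`). -/
def indicatorVec {d : ℕ} (S : Finset (Fin d)) : Fin d → ℝ :=
  fun i => if i ∈ S then 1 else 0

theorem shapleyKernel_one {d : ℕ} (hd : d ≠ 1) : shapleyKernel d 1 = 1 / d := by
  rcases eq_or_ne d 0 with rfl | hd0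
  · simp [shapleyKernel]
  have : (d : ℝ) - 1 ≠ 0 := sub_ne_zero.2 (by exact_mod_cast hd)
  simp only [shapleyKernel, Nat.choose_one_right, Nat.cast_one, mul_one]
  field_simp

theorem cast_mul_shapleyKernel {d k : ℕ} (hk : 1 ≤ k) (hkd : k + 1 < d) :
    (k : ℝ) * shapleyKernel d k = ((d : ℝ) - k - 1) * shapleyKernel d (k + 1) := by
  have hchoose : (d.choose (k + 1) : ℝ) * (k + 1) = d.choose k * (d - k) := by
    rw [← Nat.cast_sub (by omega), ← Nat.cast_add_one, ← Nat.cast_mul, ← Nat.cast_mul,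
      Nat.choose_succ_right_eq]
  have hk0 : (k : ℝ) ≠ 0 := by positivity
  have hdk : (d : ℝ) - k ≠ 0 := sub_ne_zero.2 (by exact_mod_cast (by omega : d ≠ k))
  have hdk1 : (d : ℝ) - (k + 1) ≠ 0 := sub_ne_zero.2 (by exact_mod_cast (by omega : d ≠ k + 1))
  have hc : (d.choose k : ℝ) ≠ 0 := by exact_mod_cast (Nat.choose_pos (by omega)).ne'
  have hc1 : (d.choose (k + 1) : ℝ) ≠ 0 := by exact_mod_cast (Nat.choose_pos (by omega)).ne'
  simp only [shapleyKernel]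
  push_cast
  field_simp
  linear_combination ((d : ℝ) - 1) * ((d : ℝ) - k - 1) * hchoose

theorem Finset.sum_powerset_insert_eq_of_add_insert_eq_zero {α M : Type*} [DecidableEq α]
    [AddCommMonoid M] {s : Finset α} {a : α} (ha : a ∉ s) {f : Finset α → M}
    (hpair : ∀ t ⊆ s, t.Nonempty → f t + f (insert a t) = 0) :
    ∑ t ∈ (insert a s).powerset, f t = f ∅ + f {a} := by
  rw [sum_powerset_insert ha, ← sum_add_distrib, ← sum_erase_add _ _ (empty_mem_powerset s),
    sum_eq_zero fun t ht => ?_, zero_add]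
  · rfl
  obtain ⟨hne, hts⟩ := mem_erase.1 ht
  exact hpair t (mem_powerset.1 hts) (nonempty_iff_ne_empty.2 hne)

theorem Finset.sum_filter_ne_univ_mem_eq_sum_compl {α M : Type*} [Fintype α] [DecidableEq α]
    [AddCommMonoid M] (a : α) (f : Finset α → M) :
    ∑ S ∈ univ.powerset.filter (fun S => S ≠ univ ∧ a ∈ S), f S =
      ∑ T ∈ (univ.erase a).powerset.erase ∅, f Tᶜ := by
  refine sum_nbij' compl compl (fun S hS => ?_) (fun T hT => ?_) (fun S _ => compl_compl S)
    (fun T _ => compl_compl T) (fun S _ => by rw [compl_compl])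
  · simp_all [subset_erase]
  · simp_all [subset_erase]

/-- The summand of the theorem as a function of the zero set `T = Sᶜ` of `z`. -/
noncomputable def complementTerm {d : ℕ} (i : Fin d) (T : Finset (Fin d)) : ℝ :=
  ((d : ℝ) / ((d : ℝ) - 1) * (indicatorVec Tᶜ i - 1) + 1 / ((d : ℝ) - 1) * T.card) *
    shapleyKernel d T.card

theorem summand_eq_complementTerm {d : ℕ} (i : Fin d) (S : Finset (Fin d)) :
    ((d : ℝ) / ((d : ℝ) - 1) * (indicatorVec S i - 1) + 1 / ((d : ℝ) - 1) * ((d : ℝ) - S.card)) *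
      shapleyKernel d (d - S.card) = complementTerm i Sᶜ := by
  have hS : S.card ≤ d := by simpa using card_le_univ S
  rw [complementTerm, compl_compl, card_compl, Fintype.card_fin, Nat.cast_sub hS]

theorem complementTerm_empty {d : ℕ} (i : Fin d) : complementTerm i ∅ = 0 := by
  simp [complementTerm, indicatorVec]

theorem complementTerm_singleton {d : ℕ} (hd : 2 ≤ d) (i : Fin d) :
    complementTerm i {i} = -(1 / d) := by
  have hd1 : (d : ℝ) - 1 ≠ 0 := sub_ne_zero.2 (by exact_mod_cast (by omega : d ≠ 1))
  simp only [complementTerm, indicatorVec, mem_compl, mem_singleton, not_true, if_false,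
    card_singleton, Nat.cast_one, shapleyKernel_one (by omega : d ≠ 1)]
  field_simp
  ring

theorem complementTerm_add_complementTerm_insert {d : ℕ} {i : Fin d} {t : Finset (Fin d)}
    (hit : i ∉ t) (ht : t.Nonempty) (htd : t.card + 1 < d) :
    complementTerm i t + complementTerm i (insert i t) = 0 := by
  have hd1 : (d : ℝ) - 1 ≠ 0 := sub_ne_zero.2 (by exact_mod_cast (by omega : d ≠ 1))
  have hkernel := cast_mul_shapleyKernel ht.card_pos htd
  simp only [complementTerm, indicatorVec, mem_compl, mem_insert_self, not_true, if_false, hit,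
    not_false_eq_true, if_true, card_insert_of_notMem hit]
  push_cast
  field_simp
  linear_combination hkernel

theorem sum_last_coord_one (d : ℕ) (hd : 2 ≤ d) (i : Fin d) (hi : (i : ℕ) < d - 1) :
    ∑ S ∈ univ.powerset.filter
        (fun S : Finset (Fin d) => S ≠ univ ∧ (⟨d - 1, by omega⟩ : Fin d) ∈ S),
      (((d : ℝ) / ((d : ℝ) - 1)) * (indicatorVec S i - 1) +
          (1 / ((d : ℝ) - 1)) * ((d : ℝ) - S.card)) * shapleyKernel d (d - S.card) =
      -(1 / (d : ℝ)) := by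
  set last : Fin d := ⟨d - 1, by omega⟩
  have hi_last : i ∈ univ.erase last := mem_erase.2 ⟨Fin.ne_of_lt hi, mem_univ i⟩
  simp_rw [summand_eq_complementTerm, sum_filter_ne_univ_mem_eq_sum_compl last
    (fun T => complementTerm i Tᶜ), compl_compl]
  rw [sum_erase _ (complementTerm_empty i), ← insert_erase hi_last,
    sum_powerset_insert_eq_of_add_insert_eq_zero (notMem_erase i _),
    complementTerm_empty, complementTerm_singleton hd, zero_add]
  intro t ht htne
  refine complementTerm_add_complementTerm_insert (fun h => ?_) htne ?_
  · exact (mem_erase.1 (ht h)).1 rfl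
  · have := card_le_card ht
    rw [card_erase_of_mem hi_last, card_erase_of_mem (mem_univ _), card_univ, Fintype.card_fin]
      at this
    omega
end
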